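/- arXiv:1004.3762 — 5 statements merged into one kernel-verified Lean document; each statement's English description precedes it below -/
import Mathlib

section
/- Every rational number x > 1 admits a unique finite sequence of integers b1, ..., bk with each bi ≥ 2 such that x = b1 - 1/(b2 - 1/( ... - 1/bk)). -/
/-!
Writing `x = b - r` with `b = ⌈x⌉`, the first entry of an expansion of `x` is forced to be `b`,
since for a tail `t` with entries `≥ 2` the value `1 / hj t` lies in `[0, 1)` (it is `0` for the
empty tail). This gives uniqueness by induction. For existence, if `r ≠ 0` then `r⁻¹ > 1` has
denominator `|num r| < den r = den x`, so one recurses on the denominator.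
-/

open Set

/-- Hirzebruch–Jung continued fraction value of a list of integers. -/
def hj : List ℤ → ℚ
  | [] => 0
  | b :: l => (b : ℚ) - 1 / hj l

lemma one_lt_hj_cons {b : ℤ} {t : List ℤ} (hl : ∀ c ∈ b :: t, 2 ≤ c) : 1 < hj (b :: t) := by
  induction t generalizing b with
  | nil =>
    have hb : (2 : ℚ) ≤ b := by exact_mod_cast hl b List.mem_cons_self
    simp only [hj, div_zero, sub_zero]
    linarith
  | cons c t ih =>
    have hb : (2 : ℚ) ≤ b := by exact_mod_cast hl b List.mem_cons_self
    have htail : (hj (c :: t))⁻¹ < 1 :=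
      inv_lt_one_of_one_lt₀ (ih fun d hd => hl d (List.mem_cons_of_mem b hd))
    rw [hj, one_div]
    linarith

lemma inv_hj_mem_Ico {l : List ℤ} (hl : ∀ b ∈ l, 2 ≤ b) : (hj l)⁻¹ ∈ Ico (0 : ℚ) 1 := by
  cases l with
  | nil => simp [hj]
  | cons b t =>
    have h := one_lt_hj_cons hl
    exact ⟨by positivity, inv_lt_one_of_one_lt₀ h⟩

lemma ceil_hj_cons {b : ℤ} {t : List ℤ} (hl : ∀ c ∈ b :: t, 2 ≤ c) : ⌈hj (b :: t)⌉ = b := by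
  obtain ⟨h0, h1⟩ := inv_hj_mem_Ico fun c hc => hl c (List.mem_cons_of_mem b hc)
  rw [Int.ceil_eq_iff, hj, one_div]
  constructor <;> linarith

lemma hj_injOn : InjOn hj {l | ∀ b ∈ l, 2 ≤ b} := by
  intro l hl l' hl' heq
  induction l generalizing l' with
  | nil =>
    cases l' with
    | nil => rfl
    | cons b' t' =>
      have h := one_lt_hj_cons hl'
      rw [← heq, hj] at h
      exact absurd h zero_lt_one.not_gt
  | cons b t ih =>
    cases l' with
    | nil =>
      have h := one_lt_hj_cons hl
      rw [heq, hj] at h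
      exact absurd h zero_lt_one.not_gt
    | cons b' t' =>
      have hb : b = b' := by rw [← ceil_hj_cons hl, ← ceil_hj_cons hl', heq]
      have ht : hj t = hj t' := by simpa [hj, hb] using heq
      rw [hb, ih (fun c hc => hl c (List.mem_cons_of_mem b hc))
        (fun c hc => hl' c (List.mem_cons_of_mem b' hc)) ht]

lemma Rat.den_inv_lt_den {q : ℚ} (h0 : 0 < q) (h1 : q < 1) : q⁻¹.den < q.den := by
  have hnum : q.num < q.den := by
    rw [← Rat.num_div_den q, div_lt_one (by positivity)] at h1
    exact_mod_cast h1
  have hnum0 : 0 < q.num := Rat.num_pos.mpr h0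
  rw [Rat.den_inv_of_ne_zero h0.ne']
  omega

lemma exists_hj_eq {x : ℚ} (hx : 1 < x) : ∃ l : List ℤ, l ≠ [] ∧ (∀ b ∈ l, 2 ≤ b) ∧ hj l = x := by
  induction hden : x.den using Nat.strong_induction_on generalizing x with
  | _ n ih =>
    set b := ⌈x⌉
    have hb : (2 : ℤ) ≤ b := by
      have : (1 : ℚ) < b := hx.trans_le (Int.le_ceil x)
      exact_mod_cast this
    have hbx : (b : ℚ) - x < 1 := by linarith [Int.ceil_lt_add_one x]
    rcases (sub_nonneg.mpr (Int.le_ceil x)).eq_or_lt with hr | hr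
    · refine ⟨[b], List.cons_ne_nil _ _, by simpa using hb, ?_⟩
      simp only [hj, div_zero, sub_zero]
      linarith
    · have hlt : (b - x)⁻¹.den < n := by
        rw [← hden, ← Rat.intCast_sub_den b x]
        exact Rat.den_inv_lt_den hr hbx
      obtain ⟨t, -, ht, hval⟩ := ih _ hlt (one_lt_inv₀ hr |>.mpr hbx) rfl
      refine ⟨b :: t, List.cons_ne_nil _ _, ?_, ?_⟩
      · simpa [hb] using ht
      · rw [hj, hval, one_div, inv_inv, sub_sub_cancel]

/-- Every rational `x > 1` has a unique Hirzebruch–Jung continued fraction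
expansion with all entries `≥ 2`. -/
theorem hj_exists_unique (x : ℚ) (hx : 1 < x) :
    ∃! l : List ℤ, l ≠ [] ∧ (∀ b ∈ l, 2 ≤ b) ∧ hj l = x := by
  obtain ⟨l, hne, hl, hval⟩ := exists_hj_eq hx
  exact ⟨l, ⟨hne, hl, hval⟩, fun l' ⟨_, hl', hval'⟩ => hj_injOn hl' hl (hval'.trans hval.symm)⟩
end

section
/- Let p > q > 0 be coprime integers and suppose the integer list [b1, b2, ..., bk] with all bi ≥ 2 satisfies hj([b1,...,bk]) = p^2/(p*q - 1). Then the list [b1 + 1, b2, ..., bk, 2] (first entry increased by 1 and a 2 appended at the end) satisfies hj([b1+1, b2, ..., bk, 2]) = (p+q)^2/((p+q)*q - 1), and moreover gcd(p+q, q) = 1 with p+q > q > 0. -/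
def hjStep (b : ℤ) : Matrix (Fin 2) (Fin 2) ℤ := !![b, -1; 1, 0]

def hjMatrix (l : List ℤ) : Matrix (Fin 2) (Fin 2) ℤ := (l.map hjStep).prod

@[simp] lemma hjMatrix_nil : hjMatrix [] = 1 := rfl

lemma hjMatrix_cons (b : ℤ) (l : List ℤ) : hjMatrix (b :: l) = hjStep b * hjMatrix l := by
  simp [hjMatrix]

lemma hjMatrix_singleton (b : ℤ) : hjMatrix [b] = hjStep b := by
  simp [hjMatrix]

lemma hjMatrix_append (l₁ l₂ : List ℤ) : hjMatrix (l₁ ++ l₂) = hjMatrix l₁ * hjMatrix l₂ := by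
  simp [hjMatrix]

lemma hjMatrix_cons_apply_zero (b : ℤ) (l : List ℤ) (j : Fin 2) :
    hjMatrix (b :: l) 0 j = b * hjMatrix l 0 j - hjMatrix l 1 j := by
  simp [hjMatrix_cons, hjStep, Matrix.mul_apply, Fin.sum_univ_two, sub_eq_add_neg]

lemma hjMatrix_cons_apply_one (b : ℤ) (l : List ℤ) (j : Fin 2) :
    hjMatrix (b :: l) 1 j = hjMatrix l 0 j := by
  simp [hjMatrix_cons, hjStep, Matrix.mul_apply, Fin.sum_univ_two]

lemma det_hjMatrix (l : List ℤ) : (hjMatrix l).det = 1 := by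
  induction l with
  | nil => simp
  | cons b l ih => rw [hjMatrix_cons, Matrix.det_mul, ih]; simp [hjStep, Matrix.det_fin_two_of]

lemma hjMatrix_reverse (l : List ℤ) :
    hjMatrix l.reverse = !![hjMatrix l 0 0, -hjMatrix l 1 0; -hjMatrix l 0 1, hjMatrix l 1 1] := by
  induction l with
  | nil => ext i j; fin_cases i <;> fin_cases j <;> rfl
  | cons b l ih =>
    rw [List.reverse_cons, hjMatrix_append, hjMatrix_singleton, ih]
    ext i j
    fin_cases i <;> fin_cases j <;>
      simp only [hjStep, hjMatrix_cons_apply_zero, hjMatrix_cons_apply_one, Matrix.mul_apply,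
        Fin.sum_univ_two, Matrix.of_apply, Matrix.cons_val', Matrix.cons_val_zero,
        Matrix.cons_val_one, Matrix.cons_val_fin_one, Fin.zero_eta, Fin.mk_one, Fin.isValue] <;>
      ring

lemma hjMatrix_col_bounds {l : List ℤ} (hl : ∀ x ∈ l, 2 ≤ x) :
    0 ≤ hjMatrix l 1 0 ∧ hjMatrix l 1 0 < hjMatrix l 0 0 := by
  induction l with
  | nil => simp
  | cons b l ih =>
    rw [List.forall_mem_cons] at hl
    obtain ⟨hD, hDN⟩ := ih hl.2
    rw [hjMatrix_cons_apply_zero, hjMatrix_cons_apply_one]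
    constructor <;> nlinarith

lemma hj_eq_div {l : List ℤ} (hl : ∀ x ∈ l, 2 ≤ x) :
    hj l = (hjMatrix l 0 0 : ℚ) / hjMatrix l 1 0 := by
  induction l with
  | nil => simp [hj]
  | cons b l ih =>
    rw [List.forall_mem_cons] at hl
    obtain ⟨hD, hDN⟩ := hjMatrix_col_bounds hl.2
    have hN : (hjMatrix l 0 0 : ℚ) ≠ 0 := by exact_mod_cast (hD.trans_lt hDN).ne'
    rw [hj, ih hl.2, hjMatrix_cons_apply_zero, hjMatrix_cons_apply_one]
    push_cast
    field_simp

lemma isCoprime_hjMatrix_col_zero (l : List ℤ) : IsCoprime (hjMatrix l 0 0) (hjMatrix l 1 0) := by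
  have h := det_hjMatrix l
  rw [Matrix.det_fin_two] at h
  exact ⟨hjMatrix l 1 1, -hjMatrix l 0 1, by linear_combination h⟩

lemma hjMatrix_col_zero_eq {l : List ℤ} (hl : ∀ x ∈ l, 2 ≤ x) {n a : ℤ} (hn : n ≠ 0) (ha : 0 < a)
    (hna : IsCoprime n a) (h : hj l = n / a) : hjMatrix l 0 0 = n ∧ hjMatrix l 1 0 = a := by
  rw [hj_eq_div hl] at h
  have hpos : 0 < hjMatrix l 1 0 := by
    refine (hjMatrix_col_bounds hl).1.lt_of_ne' fun h0 => hn ?_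
    rw [h0, Int.cast_zero, div_zero, eq_comm, div_eq_zero_iff] at h
    exact_mod_cast h.resolve_right (by exact_mod_cast ha.ne')
  exact Rat.div_int_inj hpos ha (Int.isCoprime_iff_gcd_eq_one.mp (isCoprime_hjMatrix_col_zero l))
    (Int.isCoprime_iff_gcd_eq_one.mp hna) h

lemma hjMatrix_eq_of_hj_eq_sq_div {p q : ℤ} (hq : 0 < q) (hpq : q < p) {l : List ℤ}
    (hl : ∀ x ∈ l, 2 ≤ x) (h : hj l = (p : ℚ) ^ 2 / (p * q - 1)) :
    hjMatrix l = !![p ^ 2, -(p ^ 2 - p * q - 1); p * q - 1, q ^ 2 - p * q + 1] := by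
  have hpq1 : 0 < p * q - 1 := by nlinarith
  have hcop : IsCoprime (p ^ 2) (p * q - 1) := IsCoprime.pow_left ⟨q, -1, by ring⟩
  obtain ⟨hn, ha⟩ :=
    hjMatrix_col_zero_eq hl (pow_ne_zero 2 (by omega)) hpq1 hcop (by push_cast; exact h)
  have hdet := det_hjMatrix l
  rw [Matrix.det_fin_two, hn, ha] at hdet
  have hu : -hjMatrix l 0 1 = p ^ 2 - p * q - 1 := by
    obtain ⟨hu0, hun⟩ := hjMatrix_col_bounds (l := l.reverse) (by simpa using hl)
    simp only [hjMatrix_reverse, hn, Matrix.of_apply, Matrix.cons_val', Matrix.cons_val_zero,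
      Matrix.cons_val_one, Matrix.empty_val', Matrix.cons_val_fin_one] at hu0 hun
    have hdvd : p ^ 2 ∣ (p ^ 2 - p * q - 1) - -hjMatrix l 0 1 :=
      hcop.dvd_of_dvd_mul_right ⟨hjMatrix l 1 1 + p * q - 1 - q ^ 2, by linear_combination -hdet⟩
    have hmod := Int.modEq_iff_dvd.mpr hdvd
    rwa [Int.ModEq, Int.emod_eq_of_lt hu0 hun,
      Int.emod_eq_of_lt (by nlinarith) (by nlinarith)] at hmod
  have hy : hjMatrix l 1 1 = q ^ 2 - p * q + 1 := by
    refine mul_left_cancel₀ (pow_ne_zero 2 (by omega : p ≠ 0)) ?_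
    linear_combination hdet - (p * q - 1) * hu
  ext i j
  fin_cases i <;> fin_cases j <;> simp [hn, ha, hy, ← hu]

lemma hjStep_add_one (b : ℤ) : hjStep (b + 1) = !![1, 1; 0, 1] * hjStep b := by
  ext i j; fin_cases i <;> fin_cases j <;> simp [hjStep]

lemma hjMatrix_incr_head_append_two (b : ℤ) (l : List ℤ) :
    hjMatrix ((b + 1) :: (l ++ [2])) = !![1, 1; 0, 1] * hjMatrix (b :: l) * hjStep 2 := by
  simp [hjMatrix, hjStep_add_one, Matrix.mul_assoc]

/-- Operation (a) on HJ expansions of `p²/(pq-1)`. -/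
theorem hj_op_a (p q : ℤ) (hq : 0 < q) (hpq : q < p) (hcop : IsCoprime p q)
    (b : ℤ) (l : List ℤ) (hall : ∀ x ∈ b :: l, 2 ≤ x)
    (hhj : hj (b :: l) = (p : ℚ) ^ 2 / (p * q - 1)) :
    hj ((b + 1) :: (l ++ [2])) = ((p + q : ℤ) : ℚ) ^ 2 / ((p + q) * q - 1) ∧
      IsCoprime (p + q) q ∧ q < p + q ∧ 0 < q := by
  have hall' : ∀ x ∈ (b + 1) :: (l ++ [2]), 2 ≤ x := by
    simp only [List.forall_mem_cons, List.forall_mem_append] at hall ⊢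
    exact ⟨by omega, hall.2, by simp⟩
  refine ⟨?_, by simpa using hcop.add_mul_left_left 1, by omega, hq⟩
  rw [hj_eq_div hall', hjMatrix_incr_head_append_two,
    hjMatrix_eq_of_hj_eq_sq_div hq hpq hall hhj]
  simp only [hjStep, Matrix.mul_apply, Fin.sum_univ_two, Matrix.of_apply, Matrix.cons_val',
    Matrix.cons_val_zero, Matrix.cons_val_one, Matrix.cons_val_fin_one, Fin.isValue]
  push_cast
  ring
end

section
/- Let p > q > 0 be coprime integers and suppose the integer list [b1, ..., b_{k-1}, bk] with all bi ≥ 2 satisfies hj([b1,...,bk]) = p^2/(p*q - 1). Then the list [2, b1, ..., b_{k-1}, bk + 1] (a 2 prepended and the last entry increased by 1) satisfies hj([2, b1, ..., bk+1]) = (2p - q)^2/((2p - q)*p - 1), and moreover gcd(2p - q, p) = 1 with 2p - q > p > 0. -/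
/-!
`hj (l ++ [x])` is the ratio of the entries of `M_l (x, 1)`, where `M_l` is the product of the
determinant-one matrices `!![b, -1; 1, 0]`, `b ∈ l`. As both `M_l (b, 1)` and `(p², pq - 1)` are
reduced fractions, the hypothesis gives `M_l (b, 1) = (p², pq - 1)`. The first column `(A, C)` of
`M_l` then satisfies `A (pq - 1) - C p² = 1` with `0 ≤ A < p²`, which forces `A = p² - pq - 1` and
`C = pq - q² - 1`. By linearity `M_l (b + 1, 1) = (2p² - pq - 1, 2pq - q² - 2)`, and prepending `2`
gives `((2p - q)², (2p - q) p - 1)`.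
-/

/-- Left multiplication of a column vector by the matrix product `∏_{b ∈ l} !![b, -1; 1, 0]`. -/
def hjAct : List ℤ → ℤ × ℤ → ℤ × ℤ
  | [], v => v
  | b :: l, v => (b * (hjAct l v).1 - (hjAct l v).2, (hjAct l v).1)

theorem hjAct_add (l : List ℤ) (v w : ℤ × ℤ) : hjAct l (v + w) = hjAct l v + hjAct l w := by
  induction l with
  | nil => rfl
  | cons b l ih =>
    simp only [hjAct, ih, Prod.fst_add, Prod.snd_add, Prod.mk_add_mk]
    congr 1
    ring

theorem hjAct_det (l : List ℤ) (v w : ℤ × ℤ) :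
    (hjAct l v).1 * (hjAct l w).2 - (hjAct l v).2 * (hjAct l w).1 = v.1 * w.2 - v.2 * w.1 := by
  induction l with
  | nil => rfl
  | cons b l ih => simp only [hjAct]; linear_combination ih

theorem hjAct_pos {l : List ℤ} (hl : ∀ x ∈ l, 2 ≤ x) {v : ℤ × ℤ}
    (h0 : 0 ≤ v.2) (h1 : v.2 ≤ v.1) (h2 : 0 < v.1) :
    0 ≤ (hjAct l v).2 ∧ (hjAct l v).2 ≤ (hjAct l v).1 ∧ 0 < (hjAct l v).1 := by
  induction l with
  | nil => exact ⟨h0, h1, h2⟩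
  | cons y l ih =>
    obtain ⟨-, hdn, hn⟩ := ih fun x hx => hl x (List.mem_cons_of_mem y hx)
    have hy : 2 ≤ y := hl y List.mem_cons_self
    simp only [hjAct]
    exact ⟨hn.le, by nlinarith, by nlinarith⟩

theorem hj_append_singleton {l : List ℤ} (hl : ∀ x ∈ l, 2 ≤ x) {x : ℤ} (hx : 1 ≤ x) :
    hj (l ++ [x]) = (hjAct l (x, 1)).1 / (hjAct l (x, 1)).2 := by
  induction l with
  | nil => simp [hj, hjAct]
  | cons y l ih =>
    have hl' : ∀ z ∈ l, 2 ≤ z := fun z hz => hl z (List.mem_cons_of_mem y hz)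
    have hn : ((hjAct l (x, 1)).1 : ℚ) ≠ 0 := by
      exact_mod_cast (hjAct_pos hl' zero_le_one hx (by omega)).2.2.ne'
    rw [List.cons_append, hj, ih hl', hjAct]
    field_simp
    push_cast
    ring

theorem hjAct_eq_of_hj_eq {l : List ℤ} (hl : ∀ x ∈ l, 2 ≤ x) {x : ℤ} (hx : 1 ≤ x) {n d : ℤ}
    (hn : n ≠ 0) (hd : 0 < d) (hnd : IsCoprime n d) (h : hj (l ++ [x]) = n / d) :
    hjAct l (x, 1) = (n, d) := by
  set N := (hjAct l (x, 1)).1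
  set D := (hjAct l (x, 1)).2
  have hND : IsCoprime N D :=
    ⟨-(hjAct l (1, 0)).2, (hjAct l (1, 0)).1, by linear_combination -hjAct_det l (x, 1) (1, 0)⟩
  rw [hj_append_singleton hl hx] at h
  have hD : 0 < D := by
    refine (hjAct_pos hl zero_le_one hx (by omega)).1.lt_of_ne fun hD0 => ?_
    rw [← hD0, Int.cast_zero, div_zero, eq_comm, div_eq_zero_iff] at h
    exact h.elim (by exact_mod_cast hn) (by exact_mod_cast hd.ne')
  obtain ⟨rfl, rfl⟩ := Rat.div_int_inj hD hd (Int.isCoprime_iff_gcd_eq_one.mp hND)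
    (Int.isCoprime_iff_gcd_eq_one.mp hnd) h
  rfl

theorem hjAct_one_zero_fst_lt {l : List ℤ} (hl : ∀ x ∈ l, 2 ≤ x) {x : ℤ} (hx : 2 ≤ x) :
    (hjAct l (1, 0)).1 < (hjAct l (x, 1)).1 := by
  have hsplit := congrArg Prod.fst (hjAct_add l (x - 1, 1) (1, 0))
  rw [show (x - 1, 1) + (1, 0) = (x, (1 : ℤ)) by simp, Prod.fst_add] at hsplit
  linarith [(hjAct_pos hl (v := (x - 1, 1)) zero_le_one (by omega) (by omega)).2.2]

/-- `(pq - 1)(p² - pq - 1) ≡ 1 [ZMOD p²]`, and an inverse modulo `p²` in `[0, p²)` is unique. -/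
theorem eq_of_mul_pq_sub_one_sub_mul_sq_eq_one {p q A C : ℤ} (hq : 0 ≤ q) (hpq : q < p)
    (hA : 0 ≤ A) (hAp : A < p ^ 2) (h : A * (p * q - 1) - C * p ^ 2 = 1) :
    A = p ^ 2 - p * q - 1 ∧ C = p * q - q ^ 2 - 1 := by
  have hdvd : p ^ 2 ∣ (A - (p ^ 2 - p * q - 1)) * (p * q - 1) :=
    ⟨C - (p * q - q ^ 2 - 1), by linear_combination h⟩
  have hcop : IsCoprime (p ^ 2) (p * q - 1) := ⟨q ^ 2, -(p * q + 1), by ring⟩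
  have hA0 : 0 ≤ p ^ 2 - p * q - 1 := by nlinarith
  have hA : A = p ^ 2 - p * q - 1 := by
    refine sub_eq_zero.mp (Int.eq_zero_of_abs_lt_dvd (hcop.dvd_of_dvd_mul_right hdvd) ?_)
    rw [abs_lt]
    constructor <;> nlinarith
  refine ⟨hA, mul_right_cancel₀ (pow_ne_zero 2 (by omega : p ≠ 0)) ?_⟩
  subst hA
  linear_combination -h

/-- Operation (b) on HJ expansions of `p²/(pq-1)`. -/
theorem hj_op_b (p q : ℤ) (hq : 0 < q) (hpq : q < p) (hcop : IsCoprime p q)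
    (l : List ℤ) (b : ℤ) (hall : ∀ x ∈ l ++ [b], 2 ≤ x)
    (hhj : hj (l ++ [b]) = (p : ℚ) ^ 2 / (p * q - 1)) :
    hj (2 :: (l ++ [b + 1])) = ((2 * p - q : ℤ) : ℚ) ^ 2 / ((2 * p - q) * p - 1) ∧
      IsCoprime (2 * p - q) p ∧ p < 2 * p - q ∧ 0 < p := by
  have hl : ∀ x ∈ l, 2 ≤ x := fun x hx => hall x (List.mem_append_left _ hx)
  have hb : 2 ≤ b := hall b (List.mem_append_right _ (List.mem_singleton_self _))
  have hlast : hjAct l (b, 1) = (p ^ 2, p * q - 1) :=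
    hjAct_eq_of_hj_eq hl (by omega) (pow_ne_zero 2 (by omega)) (by nlinarith)
      ⟨q ^ 2, -(p * q + 1), by ring⟩ (by exact_mod_cast hhj)
  have hprev : hjAct l (1, 0) = (p ^ 2 - p * q - 1, p * q - q ^ 2 - 1) := by
    have hlt := hjAct_one_zero_fst_lt hl hb
    have hdet := hjAct_det l (1, 0) (b, 1)
    rw [hlast] at hlt hdet
    obtain ⟨hA, hC⟩ := eq_of_mul_pq_sub_one_sub_mul_sq_eq_one hq.le hpq
      (hjAct_pos hl (v := (1, 0)) le_rfl zero_le_one one_pos).2.2.le hlt (by simpa using hdet)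
    exact Prod.ext hA hC
  have hnext : hjAct (2 :: l) (b + 1, 1) = ((2 * p - q) ^ 2, (2 * p - q) * p - 1) := by
    rw [hjAct, show (b + 1, (1 : ℤ)) = (b, 1) + (1, 0) by simp, hjAct_add, hlast, hprev]
    simp only [Prod.mk_add_mk, Prod.mk.injEq]
    constructor <;> ring
  have hl2 : ∀ x ∈ 2 :: l, 2 ≤ x := List.forall_mem_cons.mpr ⟨le_rfl, hl⟩
  refine ⟨?_, ?_, by omega, by omega⟩
  · rw [← List.cons_append, hj_append_singleton hl2 (by omega), hnext]
    push_cast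
    rfl
  · simpa [sub_eq_neg_add, mul_comm] using hcop.symm.neg_left.add_mul_left_left 2
end

section
/- Let S be the smallest set of pairs of positive integers containing (2,1) and closed under the two operations (p,q) ↦ (p+q, q) and (p,q) ↦ (2p-q, p). Then S equals the set of all pairs (p,q) of coprime integers with p > q > 0 and p ≥ 2. -/
/-!
Undoing the two moves is a subtractive Euclidean algorithm: a pair with `p > 2q` comes from
`(p - q, q)` by the first move, a pair with `p < 2q` from `(q, 2q - p)` by the second. Both
predecessors keep the gcd and have a smaller first entry, and the only coprime pair with
`p = 2q` is `(2, 1)`.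
-/

/-- The smallest set of pairs of positive integers containing `(2,1)` and closed
under `(p,q) ↦ (p+q,q)` and `(p,q) ↦ (2p-q,p)`. -/
inductive Reach : ℕ → ℕ → Prop
  | base : Reach 2 1
  | opA {p q : ℕ} : Reach p q → Reach (p + q) q
  | opB {p q : ℕ} : Reach p q → Reach (2 * p - q) p

theorem Nat.gcd_two_mul_sub_left {p q : ℕ} (h : q ≤ 2 * p) : gcd (2 * p - q) p = gcd q p := by
  rcases le_total q p with hqp | hpq
  · rw [show 2 * p - q = p - q + p by omega, gcd_add_self_left, gcd_self_sub_left hqp]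
  · rw [show 2 * p - q = p - (q - p) by omega, gcd_self_sub_left (by omega),
      gcd_sub_self_left hpq]

namespace Reach

theorem coprime_and_lt {p q : ℕ} (h : Reach p q) : Nat.Coprime p q ∧ 0 < q ∧ q < p := by
  induction h with
  | base => exact ⟨by decide, by omega, by omega⟩
  | opA _ ih =>
    obtain ⟨hcop, hq, hqp⟩ := ih
    exact ⟨Nat.coprime_add_self_left.mpr hcop, hq, by omega⟩
  | @opB p q _ ih =>
    obtain ⟨hcop, hq, hqp⟩ := ih
    refine ⟨?_, by omega, by omega⟩
    rw [Nat.Coprime, Nat.gcd_two_mul_sub_left (by omega), Nat.gcd_comm]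
    exact hcop

theorem of_sub {p q : ℕ} (h : Reach (p - q) q) (hqp : q ≤ p) : Reach p q := by
  simpa [Nat.sub_add_cancel hqp] using h.opA

theorem of_two_mul_sub {p q : ℕ} (h : Reach q (2 * q - p)) (hpq : p ≤ 2 * q) : Reach p q := by
  simpa [Nat.sub_sub_self hpq] using h.opB

theorem of_coprime {p q : ℕ} (hcop : Nat.Coprime p q) (hq : 0 < q) (hqp : q < p) :
    Reach p q := by
  induction p using Nat.strong_induction_on generalizing q with
  | _ p ih =>
    rcases Nat.lt_trichotomy p (2 * q) with hlt | rfl | hgt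
    · refine of_two_mul_sub (ih q hqp ?_ (by omega) (by omega)) hlt.le
      rw [Nat.coprime_comm, Nat.Coprime, Nat.gcd_two_mul_sub_left hlt.le]
      exact hcop
    · obtain rfl : q = 1 := hcop.symm.eq_one_of_dvd (Dvd.intro_left 2 rfl)
      exact base
    · refine of_sub (ih (p - q) (by omega) ?_ hq (by omega)) hqp.le
      exact (Nat.coprime_sub_self_left hqp.le).mpr hcop

end Reach

theorem reach_iff (p q : ℕ) :
    Reach p q ↔ Nat.Coprime p q ∧ q < p ∧ 0 < q ∧ 2 ≤ p := by
  constructor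
  · intro h
    obtain ⟨hcop, hq, hqp⟩ := h.coprime_and_lt
    exact ⟨hcop, hqp, hq, by omega⟩
  · rintro ⟨hcop, hqp, hq, -⟩
    exact Reach.of_coprime hcop hq hqp
end

section
/- Let [b1, ..., bk] be a list of integers with each bi ≥ 2, and write hj([b1,...,bk]) = m/n in lowest terms (m, n positive coprime integers). Let M be the k×k symmetric tridiagonal matrix with diagonal entries M_{ii} = -b_i and off-diagonal entries M_{i,i+1} = M_{i+1,i} = 1 (all other entries 0). Then det(M) = (-1)^k · m. -/
/-- The intersection matrix of the linear plumbing with weights `-b₁, …, -bₖ`. -/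
def plumbingMatrix (l : List ℤ) : Matrix (Fin l.length) (Fin l.length) ℤ :=
  fun i j =>
    if i = j then -(l.get i)
    else if (i : ℕ) + 1 = (j : ℕ) ∨ (j : ℕ) + 1 = (i : ℕ) then 1 else 0

def continuant : List ℤ → ℤ
  | [] => 1
  | [b] => b
  | b :: c :: t => b * continuant (c :: t) - continuant t

section plumbingMatrix

variable {l : List ℤ} {i j : Fin l.length}

theorem plumbingMatrix_apply_of_adjacent (h : (i : ℕ) + 1 = j ∨ (j : ℕ) + 1 = i) :
    plumbingMatrix l i j = 1 := by
  have hij : i ≠ j := by rintro rfl; omega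
  simp [plumbingMatrix, hij, h]

theorem plumbingMatrix_apply_of_not_adjacent (hij : i ≠ j)
    (h : ¬((i : ℕ) + 1 = j ∨ (j : ℕ) + 1 = i)) : plumbingMatrix l i j = 0 := by
  simp [plumbingMatrix, hij, h]

theorem plumbingMatrix_cons_submatrix_succ (a : ℤ) (l : List ℤ) :
    (plumbingMatrix (a :: l)).submatrix Fin.succ Fin.succ = plumbingMatrix l := by
  ext i j
  simp only [plumbingMatrix, Matrix.submatrix_apply, Fin.succ_inj, Fin.val_succ,
    add_left_inj]
  rfl

theorem det_plumbingMatrix_submatrix_succ_succAbove_one (b c : ℤ) (t : List ℤ) :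
    ((plumbingMatrix (b :: c :: t)).submatrix Fin.succ
      (Fin.succAbove (1 : Fin (t.length + 2)))).det = (plumbingMatrix t).det := by
  -- the first column of this minor is `(1, 0, …, 0)`
  rw [Matrix.det_succ_column_zero, Fintype.sum_eq_single 0]
  · simp only [Matrix.submatrix_apply, Matrix.submatrix_submatrix, Fin.succAbove_zero]
    have hcol : Fin.succAbove (1 : Fin (t.length + 2)) ∘ Fin.succ = Fin.succ ∘ Fin.succ :=
      funext fun j => Fin.succAbove_of_le_castSucc _ _ (by simp [Fin.le_def])
    rw [hcol, ← Matrix.submatrix_submatrix, plumbingMatrix_cons_submatrix_succ,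
      plumbingMatrix_cons_submatrix_succ, plumbingMatrix_apply_of_adjacent (by simp)]
    simp
  · intro i hi
    rw [Matrix.submatrix_apply, Fin.succAbove_ne_zero_zero one_ne_zero,
      plumbingMatrix_apply_of_not_adjacent (Fin.succ_ne_zero i) ?_]
    · simp
    have hi0 : (i : ℕ) ≠ 0 := Fin.val_ne_iff.mpr hi
    simp only [Fin.val_succ, Fin.val_zero]
    omega

theorem det_plumbingMatrix_cons_cons (b c : ℤ) (t : List ℤ) :
    (plumbingMatrix (b :: c :: t)).det
      = -b * (plumbingMatrix (c :: t)).det - (plumbingMatrix t).det := by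
  rw [Matrix.det_succ_row_zero (n := t.length + 1), Fin.sum_univ_succ, Fin.sum_univ_succ,
    Finset.sum_eq_zero fun j _ => by
      rw [plumbingMatrix_apply_of_not_adjacent (Fin.succ_ne_zero _).symm (by simp), mul_zero,
        zero_mul],
    Fin.succAbove_zero, plumbingMatrix_cons_submatrix_succ, Fin.succ_zero_eq_one,
    det_plumbingMatrix_submatrix_succ_succAbove_one,
    plumbingMatrix_apply_of_adjacent (i := 0) (j := 1) (by simp)]
  simp [plumbingMatrix, sub_eq_add_neg]

end plumbingMatrix

theorem det_plumbingMatrix : ∀ l : List ℤ,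
    (plumbingMatrix l).det = (-1) ^ l.length * continuant l
  | [] => by simp [continuant]
  | [b] => by simp [plumbingMatrix, continuant]
  | b :: c :: t => by
    rw [det_plumbingMatrix_cons_cons, det_plumbingMatrix (c :: t), det_plumbingMatrix t]
    simp only [continuant, List.length_cons, pow_succ]
    ring

theorem isCoprime_continuant_tail : ∀ l : List ℤ, IsCoprime (continuant l) (continuant l.tail)
  | [] => isCoprime_one_left
  | [_] => isCoprime_one_right
  | b :: c :: t => by
    rw [continuant, List.tail_cons, sub_eq_neg_add, mul_comm]
    exact (isCoprime_continuant_tail (c :: t)).symm.neg_left.add_mul_left_left b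

theorem continuant_tail_le_and_pos :
    ∀ {l : List ℤ}, (∀ b ∈ l, 2 ≤ b) → continuant l.tail ≤ continuant l ∧ 0 < continuant l
  | [], _ => by simp [continuant]
  | [b], hl => by
    have hb := hl b List.mem_cons_self
    simp only [continuant, List.tail_cons]
    constructor <;> omega
  | b :: c :: t, hl => by
    obtain ⟨hb, hct⟩ := List.forall_mem_cons.mp hl
    obtain ⟨hle, hpos⟩ := continuant_tail_le_and_pos hct
    simp only [continuant, List.tail_cons] at hle hpos ⊢
    constructor <;> nlinarith

theorem continuant_pos {l : List ℤ} (hl : ∀ b ∈ l, 2 ≤ b) : 0 < continuant l :=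
  (continuant_tail_le_and_pos hl).2

theorem hj_eq_continuant_div :
    ∀ {l : List ℤ}, l ≠ [] → (∀ b ∈ l, 2 ≤ b) → hj l = continuant l / continuant l.tail
  | [b], _, _ => by simp [hj, continuant]
  | b :: c :: t, _, hl => by
    have hct := (List.forall_mem_cons.mp hl).2
    have hC : (continuant (c :: t) : ℚ) ≠ 0 := by exact_mod_cast (continuant_pos hct).ne'
    rw [hj, hj_eq_continuant_div (List.cons_ne_nil c t) hct, one_div_div]
    simp only [continuant, List.tail_cons]
    push_cast
    field_simp

theorem det_plumbing_general (l : List ℤ) (hne : l ≠ []) (hall : ∀ b ∈ l, 2 ≤ b)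
    (m n : ℕ) (hn : 0 < n) (hcop : Nat.Coprime m n)
    (hhj : hj l = (m : ℚ) / (n : ℚ)) :
    (plumbingMatrix l).det = (-1) ^ l.length * (m : ℤ) := by
  have htail : 0 < continuant l.tail := continuant_pos fun b hb => hall b (List.mem_of_mem_tail hb)
  have hfrac : (continuant l : ℚ) / (continuant l.tail : ℚ) = ((m : ℤ) : ℚ) / ((n : ℤ) : ℚ) := by
    rw [← hj_eq_continuant_div hne hall, hhj, Int.cast_natCast, Int.cast_natCast]
  have hnum := (Rat.div_int_inj htail (by exact_mod_cast hn)
    (Int.isCoprime_iff_gcd_eq_one.mp (isCoprime_continuant_tail l))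
    (by simpa only [Int.natAbs_natCast] using hcop) hfrac).1
  rw [det_plumbingMatrix, hnum]

theorem det_plumbing (l : List ℤ) (hne : l ≠ []) (hall : ∀ b ∈ l, 2 ≤ b)
    (m n : ℕ) (hm : 0 < m) (hn : 0 < n) (hcop : Nat.Coprime m n)
    (hhj : hj l = (m : ℚ) / (n : ℚ)) :
    (plumbingMatrix l).det = (-1) ^ l.length * (m : ℤ) :=
  det_plumbing_general l hne hall m n hn hcop hhj
end
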